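/- For Re d > 0, Re w > 0, Re z > 0 with Re(d - 2w) > 0, the generalised Riesz means satisfy the composition law R_{d-2w,w}(R_{d,z} f) = R_{d-2w, w+z} f for every Schwartz function f on ℝ. -/

import Mathlib

/-!
Write `K_{d,z}(s) = s^{d-1} (1 - s²)^{z-1}`. The left-hand side is a double integral of
`K_{d-2w,w}(s) K_{d,z}(u) f(ust)` over the unit square. Substituting `v = us` and exchanging the
order of integration over the triangle `0 < v < s < 1` turns it into `∫_0^1 k(v) f(vt) dv`, where
`k(v) = ∫_v^1 K_{d-2w,w}(s) K_{d,z}(v/s) ds/s` is a multiplicative convolution of the two kernels.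
The substitution `τ = v²(s⁻² - 1)/(1 - v²)` maps `(v, 1)` onto `(0, 1)` and turns `k(v)` into
`B(w,z)/2 · K_{d-2w,w+z}(v)`; finally `B(w,z) = Γ(w)Γ(z)/Γ(w+z)` matches the normalising constants.
-/

open MeasureTheory Complex

/-- The generalised Riesz mean of order `(d,z)`:
`R_{d,z} f(t) = (2/Γ(z)) ∫_0^1 s^{d-1} (1-s²)^{z-1} f(st) ds`. -/
noncomputable def rieszMean (d z : ℂ) (f : ℝ → ℂ) (t : ℝ) : ℂ :=
  (2 / Complex.Gamma z) *
    ∫ s in (0:ℝ)..1, (s : ℂ) ^ (d - 1) * ((1 : ℂ) - (s : ℂ) ^ 2) ^ (z - 1) * f (s * t)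

open Set

theorem setIntegral_Ioo_comp_div {E : Type*} [NormedAddCommGroup E] [NormedSpace ℝ E]
    {s : ℝ} (hs : 0 < s) (G : ℝ → E) :
    ∫ v in Ioo 0 s, G (v / s) = s • ∫ u in Ioo 0 1, G u := by
  rw [← integral_Ioc_eq_integral_Ioo, ← integral_Ioc_eq_integral_Ioo,
    ← intervalIntegral.integral_of_le hs.le, ← intervalIntegral.integral_of_le zero_le_one,
    intervalIntegral.integral_comp_div _ hs.ne', zero_div, div_self hs.ne']

theorem MeasureTheory.IntegrableOn.comp_div_Ioo {E : Type*} [NormedAddCommGroup E] {G : ℝ → E}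
    (hG : IntegrableOn G (Ioo 0 1)) {s : ℝ} (hs : 0 < s) :
    IntegrableOn (fun v => G (v / s)) (Ioo 0 s) := by
  have hind :
      (Ioo 0 s).indicator (fun v => G (v / s)) = fun v => (Ioo 0 1).indicator G (v / s) := by
    funext v
    simp only [indicator_apply, mem_Ioo, lt_div_iff₀ hs, div_lt_one hs, zero_mul]
  rw [← integrable_indicator_iff measurableSet_Ioo, hind]
  exact ((integrable_indicator_iff measurableSet_Ioo).2 hG).comp_div hs.ne'

def triangleIoo (a b : ℝ) : Set (ℝ × ℝ) := {p | p.1 ∈ Ioo a b ∧ p.2 ∈ Ioo a p.1}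

theorem measurableSet_triangleIoo (a b : ℝ) : MeasurableSet (triangleIoo a b) := by
  simp only [triangleIoo, mem_Ioo]; measurability

theorem indicator_triangleIoo_eq_left {M : Type*} [Zero M] (a b : ℝ) (F : ℝ × ℝ → M) (s : ℝ) :
    (fun v => (triangleIoo a b).indicator F (s, v)) =
      (Ioo a b).indicator (fun s => (Ioo a s).indicator fun v => F (s, v)) s := by
  funext v
  simp only [triangleIoo, indicator_apply, ite_apply, mem_ofPred_eq, mem_Ioo, Pi.zero_apply]
  split_ifs <;> grind

theorem indicator_triangleIoo_eq_right {M : Type*} [Zero M] (a b : ℝ) (F : ℝ × ℝ → M) (v : ℝ) :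
    (fun s => (triangleIoo a b).indicator F (s, v)) =
      (Ioo a b).indicator (fun v => (Ioo v b).indicator fun s => F (s, v)) v := by
  funext s
  simp only [triangleIoo, indicator_apply, ite_apply, mem_ofPred_eq, mem_Ioo, Pi.zero_apply]
  split_ifs <;> grind

theorem integral_indicator_apply_eq {E : Type*} [NormedAddCommGroup E] [NormedSpace ℝ E]
    (S : Set ℝ) (Φ : ℝ → ℝ → E) (s : ℝ) :
    ∫ v, S.indicator Φ s v = S.indicator (fun s => ∫ v, Φ s v) s := by
  by_cases hs : s ∈ S <;> simp [hs]

theorem setIntegral_Ioo_Ioo_swap {E : Type*} [NormedAddCommGroup E] [NormedSpace ℝ E]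
    {a b : ℝ} {F : ℝ × ℝ → E} (hF : IntegrableOn F (triangleIoo a b)) :
    ∫ s in Ioo a b, ∫ v in Ioo a s, F (s, v) = ∫ v in Ioo a b, ∫ s in Ioo v b, F (s, v) := by
  have h := integral_integral_swap (μ := volume) (ν := volume)
    (f := fun s v => (triangleIoo a b).indicator F (s, v))
    (by rw [← Measure.volume_eq_prod]
        exact (integrable_indicator_iff (measurableSet_triangleIoo a b)).2 hF)
  simpa only [indicator_triangleIoo_eq_left a b F, indicator_triangleIoo_eq_right a b F,
    integral_indicator_apply_eq, integral_indicator measurableSet_Ioo] using h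

section MulConvolution

variable {k₁ k₂ g : ℝ → ℂ} {M : ℝ}

theorem integrableOn_mulConv_section (hk₂ : IntegrableOn k₂ (Ioo 0 1)) (hg : Measurable g)
    (hgM : ∀ v ∈ Ioo (0 : ℝ) 1, ‖g v‖ ≤ M) {s : ℝ} (hs : s ∈ Ioo (0 : ℝ) 1) (c : ℂ) :
    IntegrableOn (fun v => c * (k₂ (v / s) / s) * g v) (Ioo 0 s) := by
  refine (((hk₂.comp_div_Ioo hs.1).div_const (s : ℂ)).const_mul c).mul_bdd (c := M)
    hg.aestronglyMeasurable ?_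
  exact (ae_restrict_iff' measurableSet_Ioo).2
    (ae_of_all _ fun v hv => hgM v ⟨hv.1, hv.2.trans hs.2⟩)

theorem setIntegral_norm_mulConv_le (hk₂ : IntegrableOn k₂ (Ioo 0 1))
    (hgM : ∀ v ∈ Ioo (0 : ℝ) 1, ‖g v‖ ≤ M) {s : ℝ} (hs : s ∈ Ioo (0 : ℝ) 1) :
    ∫ v in Ioo 0 s, ‖k₁ s * (k₂ (v / s) / s) * g v‖
      ≤ ‖k₁ s‖ * (M * ∫ u in Ioo 0 1, ‖k₂ u‖) := by
  have hint : IntegrableOn (fun v => ‖k₁ s‖ * (‖k₂ (v / s)‖ / s) * M) (Ioo 0 s) :=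
    (((IntegrableOn.comp_div_Ioo hk₂.norm hs.1).div_const s).const_mul _).mul_const M
  calc ∫ v in Ioo 0 s, ‖k₁ s * (k₂ (v / s) / s) * g v‖
      ≤ ∫ v in Ioo 0 s, ‖k₁ s‖ * (‖k₂ (v / s)‖ / s) * M := by
        refine integral_mono_of_nonneg (ae_of_all _ fun v => norm_nonneg _) hint ?_
        refine (ae_restrict_iff' measurableSet_Ioo).2 (ae_of_all _ fun v hv => ?_)
        dsimp only
        rw [norm_mul, norm_mul, norm_div, Complex.norm_real, Real.norm_of_nonneg hs.1.le]
        exact mul_le_mul_of_nonneg_left (hgM v ⟨hv.1, hv.2.trans hs.2⟩)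
          (mul_nonneg (norm_nonneg _) (div_nonneg (norm_nonneg _) hs.1.le))
    _ = ‖k₁ s‖ * (M * ∫ u in Ioo 0 1, ‖k₂ u‖) := by
        rw [integral_mul_const, integral_const_mul, integral_div,
          setIntegral_Ioo_comp_div hs.1 (‖k₂ ·‖), smul_eq_mul, mul_div_cancel_left₀ _ hs.1.ne']
        ring

theorem integrableOn_triangleIoo_mulConv (hk₁m : Measurable k₁) (hk₂m : Measurable k₂)
    (hk₁ : IntegrableOn k₁ (Ioo 0 1)) (hk₂ : IntegrableOn k₂ (Ioo 0 1)) (hg : Measurable g)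
    (hgM : ∀ v ∈ Ioo (0 : ℝ) 1, ‖g v‖ ≤ M) :
    IntegrableOn (fun p : ℝ × ℝ => k₁ p.1 * (k₂ (p.2 / p.1) / p.1) * g p.2) (triangleIoo 0 1) := by
  set F : ℝ × ℝ → ℂ := fun p => k₁ p.1 * (k₂ (p.2 / p.1) / p.1) * g p.2
  have hT := measurableSet_triangleIoo 0 1
  have hF : AEStronglyMeasurable ((triangleIoo 0 1).indicator F) (volume.prod volume) :=
    ((by fun_prop : Measurable F).indicator hT).aestronglyMeasurable
  rw [← integrable_indicator_iff hT, Measure.volume_eq_prod, integrable_prod_iff hF]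
  constructor
  · refine ae_of_all _ fun s => ?_
    rw [indicator_triangleIoo_eq_left]
    by_cases hs : s ∈ Ioo (0 : ℝ) 1
    · rw [indicator_of_mem hs, integrable_indicator_iff measurableSet_Ioo]
      exact integrableOn_mulConv_section hk₂ hg hgM hs (k₁ s)
    · rw [indicator_of_notMem hs]
      exact integrable_zero _ _ _
  · refine Integrable.mono' ((integrable_indicator_iff measurableSet_Ioo).2
      (hk₁.norm.mul_const (M * ∫ u in Ioo 0 1, ‖k₂ u‖))) hF.norm.integral_prod_right'
      (ae_of_all _ fun s => ?_)
    simp only [norm_indicator_eq_indicator_norm]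
    rw [indicator_triangleIoo_eq_left, integral_indicator_apply_eq]
    by_cases hs : s ∈ Ioo (0 : ℝ) 1
    · rw [indicator_of_mem hs, indicator_of_mem hs, integral_indicator measurableSet_Ioo,
        Real.norm_of_nonneg (integral_nonneg fun _ => norm_nonneg _)]
      exact setIntegral_norm_mulConv_le hk₂ hgM hs
    · rw [indicator_of_notMem hs, indicator_of_notMem hs, norm_zero]

theorem setIntegral_mul_setIntegral_comp_mul_eq (hk₁m : Measurable k₁) (hk₂m : Measurable k₂)
    (hk₁ : IntegrableOn k₁ (Ioo 0 1)) (hk₂ : IntegrableOn k₂ (Ioo 0 1)) (hg : Measurable g)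
    (hgM : ∀ v ∈ Ioo (0 : ℝ) 1, ‖g v‖ ≤ M) :
    ∫ s in Ioo 0 1, k₁ s * ∫ u in Ioo 0 1, k₂ u * g (u * s) =
      ∫ v in Ioo 0 1, (∫ s in Ioo v 1, k₁ s * (k₂ (v / s) / s)) * g v := by
  calc ∫ s in Ioo 0 1, k₁ s * ∫ u in Ioo 0 1, k₂ u * g (u * s)
      = ∫ s in Ioo 0 1, ∫ v in Ioo 0 s, k₁ s * (k₂ (v / s) / s) * g v := by
        refine setIntegral_congr_fun measurableSet_Ioo fun s hs => ?_
        have hs0 : (s : ℂ) ≠ 0 := ofReal_ne_zero.2 hs.1.ne'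
        have h := setIntegral_Ioo_comp_div hs.1 fun u => k₂ u * g (u * s)
        simp only [div_mul_cancel₀ _ hs.1.ne', Complex.real_smul] at h
        rw [← inv_mul_eq_iff_eq_mul₀ hs0] at h
        rw [← h, ← integral_const_mul, ← integral_const_mul]
        congr 1 with v
        field_simp
    _ = ∫ v in Ioo 0 1, ∫ s in Ioo v 1, k₁ s * (k₂ (v / s) / s) * g v :=
        setIntegral_Ioo_Ioo_swap (integrableOn_triangleIoo_mulConv hk₁m hk₂m hk₁ hk₂ hg hgM)
    _ = ∫ v in Ioo 0 1, (∫ s in Ioo v 1, k₁ s * (k₂ (v / s) / s)) * g v := by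
        simp only [integral_mul_const]

end MulConvolution

theorem setIntegral_Ioo_zero_one_eq_comp_inv_sq {E : Type*} [NormedAddCommGroup E]
    [NormedSpace ℝ E] {v : ℝ} (hv : 0 < v) (hv1 : v < 1) (B : ℝ → E) :
    ∫ t in Ioo 0 1, B t =
      ∫ s in Ioo v 1,
        (2 * (v ^ 2 / (1 - v ^ 2) / s ^ 3)) • B (v ^ 2 / (1 - v ^ 2) * ((s ^ 2)⁻¹ - 1)) := by
  -- `κ` is chosen so that `φ v = 1` and `φ 1 = 0`.
  set κ := v ^ 2 / (1 - v ^ 2) with hκ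
  have hκ0 : 0 < κ := div_pos (by positivity) (by nlinarith)
  set φ : ℝ → ℝ := fun s => κ * ((s ^ 2)⁻¹ - 1)
  have hanti : StrictAntiOn φ (Ioi 0) := fun a ha b _ hab => by
    have : (b ^ 2)⁻¹ < (a ^ 2)⁻¹ :=
      inv_strictAnti₀ (pow_pos ha 2) (pow_lt_pow_left₀ hab ha.le two_ne_zero)
    simp only [φ]
    nlinarith
  have himage : φ '' Ioo v 1 = Ioo 0 1 := by
    have hcont : ContinuousOn φ (Icc v 1) := by
      refine ContinuousOn.mul continuousOn_const (ContinuousOn.sub ?_ continuousOn_const)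
      exact (continuousOn_pow 2).inv₀ fun s hs => pow_ne_zero 2 (hv.trans_le hs.1).ne'
    rw [hcont.image_Ioo_of_strictAntiOn hv1.le (hanti.mono fun s hs => hv.trans_le hs.1)]
    congr 1
    · simp [φ]
    · have : 1 - v ^ 2 ≠ 0 := by nlinarith
      simp only [φ, hκ]
      field_simp
  have hderiv : ∀ s ∈ Ioo v 1, HasDerivWithinAt φ (-(2 * (κ / s ^ 3))) (Ioo v 1) s := by
    intro s hs
    have hs0 : s ≠ 0 := (hv.trans hs.1).ne'
    have h := (((hasDerivAt_pow 2 s).inv (pow_ne_zero 2 hs0)).sub_const 1).const_mul κ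
    refine (h.congr_deriv ?_).hasDerivWithinAt
    field_simp
    ring
  rw [← himage, integral_image_eq_integral_abs_deriv_smul measurableSet_Ioo hderiv
    (hanti.injOn.mono fun s hs => hv.trans hs.1)]
  refine setIntegral_congr_fun measurableSet_Ioo fun s hs => ?_
  rw [abs_neg, abs_of_pos (by have := hv.trans hs.1; positivity)]

theorem Complex.ofReal_eq_exp_log {a : ℝ} (ha : 0 < a) : (a : ℂ) = exp (Real.log a) := by
  rw [← ofReal_exp, Real.exp_log ha]

theorem Complex.ofReal_cpow_eq_exp_log {a : ℝ} (ha : 0 < a) (c : ℂ) :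
    (a : ℂ) ^ c = exp (Real.log a * c) := by
  rw [cpow_def_of_ne_zero (ofReal_ne_zero.2 ha.ne'), ofReal_log ha.le]

noncomputable def rieszKernel (d z : ℂ) (s : ℝ) : ℂ :=
  (s : ℂ) ^ (d - 1) * ((1 : ℂ) - (s : ℂ) ^ 2) ^ (z - 1)

theorem rieszMean_eq_setIntegral (d z : ℂ) (f : ℝ → ℂ) (t : ℝ) :
    rieszMean d z f t = 2 / Gamma z * ∫ s in Ioo 0 1, rieszKernel d z s * f (s * t) := by
  rw [rieszMean, intervalIntegral.integral_of_le zero_le_one, integral_Ioc_eq_integral_Ioo]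
  rfl

theorem measurable_rieszKernel (d z : ℂ) : Measurable (rieszKernel d z) := by
  unfold rieszKernel; fun_prop

theorem integrableOn_rieszKernel {d z : ℂ} (hd : 0 < d.re) (hz : 0 < z.re) :
    IntegrableOn (rieszKernel d z) (Ioo 0 1) := by
  have hbeta : IntegrableOn (fun x : ℝ => (x : ℂ) ^ (d - 1) * (1 - (x : ℂ)) ^ (z - 1)) (Ioo 0 1) :=
    (intervalIntegrable_iff_integrableOn_Ioo_of_le zero_le_one).1 (betaIntegral_convergent hd hz)
  have hcont : ContinuousOn (fun x : ℝ => ((1 + x : ℝ) : ℂ) ^ (z - 1)) (Icc 0 1) :=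
    ContinuousOn.cpow_const (by fun_prop) fun x hx => ofReal_mem_slitPlane.2 (by linarith [hx.1])
  refine (hbeta.mul_continuousOn_of_subset hcont measurableSet_Ioo isCompact_Icc
    Ioo_subset_Icc_self).congr_fun (fun x hx => ?_) measurableSet_Ioo
  have hsq : (1 : ℂ) - (x : ℂ) ^ 2 = ((1 - x : ℝ) : ℂ) * ((1 + x : ℝ) : ℂ) := by push_cast; ring
  rw [rieszKernel, hsq, mul_cpow_ofReal_nonneg (by linarith [hx.2]) (by linarith [hx.1]),
    ofReal_sub, ofReal_one]
  exact mul_assoc _ _ _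

theorem rieszKernel_mul_rieszKernel_div (d w z : ℂ) {v s : ℝ} (hv : 0 < v) (hvs : v < s)
    (hs : s < 1) :
    rieszKernel (d - 2 * w) w s * (rieszKernel d z (v / s) / s) =
      rieszKernel (d - 2 * w) (w + z) v *
        ((v ^ 2 / (1 - v ^ 2) / s ^ 3 : ℝ) *
          (((v ^ 2 / (1 - v ^ 2) * ((s ^ 2)⁻¹ - 1) : ℝ) : ℂ) ^ (w - 1) *
            (1 - ((v ^ 2 / (1 - v ^ 2) * ((s ^ 2)⁻¹ - 1) : ℝ) : ℂ)) ^ (z - 1))) := by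
  have hs0 : 0 < s := hv.trans hvs
  have h1v : 0 < 1 - v ^ 2 := by nlinarith
  have h1s : 0 < 1 - s ^ 2 := by nlinarith
  have hsv : 0 < s ^ 2 - v ^ 2 := by nlinarith
  have ht : v ^ 2 / (1 - v ^ 2) * ((s ^ 2)⁻¹ - 1) =
      v ^ 2 * (1 - s ^ 2) / ((1 - v ^ 2) * s ^ 2) := by
    field_simp
  have h1t : (1 : ℂ) - ((v ^ 2 * (1 - s ^ 2) / ((1 - v ^ 2) * s ^ 2) : ℝ) : ℂ) =
      (((s ^ 2 - v ^ 2) / ((1 - v ^ 2) * s ^ 2) : ℝ) : ℂ) := by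
    rw [← ofReal_one, ← ofReal_sub]
    congr 1
    field_simp
    ring
  have hvs_sq : 1 - (v / s) ^ 2 = (s ^ 2 - v ^ 2) / s ^ 2 := by field_simp
  have hsq : ∀ x : ℝ, (1 : ℂ) - (x : ℂ) ^ 2 = ((1 - x ^ 2 : ℝ) : ℂ) := fun x => by push_cast; ring
  rw [rieszKernel, rieszKernel, rieszKernel, hsq, hsq, hsq, hvs_sq, ht, h1t,
    div_eq_mul_inv _ (s : ℂ), ← ofReal_inv, ofReal_eq_exp_log (inv_pos.2 hs0),
    ofReal_eq_exp_log (by positivity : 0 < v ^ 2 / (1 - v ^ 2) / s ^ 3),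
    ofReal_cpow_eq_exp_log hs0, ofReal_cpow_eq_exp_log h1s,
    ofReal_cpow_eq_exp_log (div_pos hv hs0), ofReal_cpow_eq_exp_log (div_pos hsv (by positivity)),
    ofReal_cpow_eq_exp_log hv, ofReal_cpow_eq_exp_log h1v,
    ofReal_cpow_eq_exp_log (by positivity : 0 < v ^ 2 * (1 - s ^ 2) / ((1 - v ^ 2) * s ^ 2)),
    ofReal_cpow_eq_exp_log (by positivity : 0 < (s ^ 2 - v ^ 2) / ((1 - v ^ 2) * s ^ 2))]
  -- All bases are now positive reals, so it remains to compare exponents, which are linear in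
  -- the logarithms of `v`, `s`, `1 - v²`, `1 - s²` and `s² - v²`.
  simp only [← exp_add]
  congr 1
  simp only [Real.log_div, Real.log_mul, Real.log_pow, Real.log_inv, ne_eq, hv.ne', hs0.ne',
    h1v.ne', h1s.ne', hsv.ne', pow_eq_zero_iff, mul_eq_zero, div_eq_zero_iff, not_false_eq_true,
    OfNat.ofNat_ne_zero, or_self]
  push_cast
  ring

theorem setIntegral_rieszKernel_mul_rieszKernel_div (d w z : ℂ) {v : ℝ} (hv : v ∈ Ioo (0 : ℝ) 1) :
    ∫ s in Ioo v 1, rieszKernel (d - 2 * w) w s * (rieszKernel d z (v / s) / s) =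
      rieszKernel (d - 2 * w) (w + z) v * (betaIntegral w z / 2) := by
  rw [betaIntegral, intervalIntegral.integral_of_le zero_le_one, integral_Ioc_eq_integral_Ioo,
    setIntegral_Ioo_zero_one_eq_comp_inv_sq hv.1 hv.2, ← integral_div, ← integral_const_mul]
  refine setIntegral_congr_fun measurableSet_Ioo fun s hs => ?_
  rw [rieszKernel_mul_rieszKernel_div d w z hv.1 hs.1 hs.2, real_smul]
  push_cast
  ring

theorem betaIntegral_eq_Gamma_mul_div {w z : ℂ} (hw : 0 < w.re) (hz : 0 < z.re) :
    betaIntegral w z = Gamma w * Gamma z / Gamma (w + z) := by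
  rw [Gamma_mul_Gamma_eq_betaIntegral hw hz,
    mul_div_cancel_left₀ _ (Gamma_ne_zero_of_re_pos (add_pos hw hz))]

theorem rieszMean_rieszMean (a w d z : ℂ) (f : ℝ → ℂ) (t : ℝ) :
    rieszMean a w (rieszMean d z f) t = 2 / Gamma w * (2 / Gamma z) *
      ∫ s in Ioo 0 1, rieszKernel a w s * ∫ u in Ioo 0 1, rieszKernel d z u * f (u * s * t) := by
  rw [rieszMean_eq_setIntegral, mul_assoc, ← integral_const_mul (2 / Gamma z)]
  congr 1
  refine setIntegral_congr_fun measurableSet_Ioo fun s _ => ?_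
  simp only [rieszMean_eq_setIntegral, mul_assoc]
  ring

/-- Composition law for generalised Riesz means:
for `Re d > 0`, `Re w > 0`, `Re z > 0`, `Re(d-2w) > 0`,
`R_{d-2w,w}(R_{d,z} f) = R_{d-2w,w+z} f` for every Schwartz function `f`. -/
theorem rieszMean_comp (d w z : ℂ) (hd : 0 < d.re) (hw : 0 < w.re) (hz : 0 < z.re)
    (hdw : 0 < (d - 2 * w).re) (f : SchwartzMap ℝ ℂ) (t : ℝ) :
    rieszMean (d - 2 * w) w (rieszMean d z f) t = rieszMean (d - 2 * w) (w + z) f t := by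
  have hg : Measurable fun v => f (v * t) := (f.continuous.comp (continuous_mul_const t)).measurable
  have hgM : ∀ v ∈ Ioo (0 : ℝ) 1, ‖f (v * t)‖ ≤ ‖f.toBoundedContinuousFunction‖ :=
    fun v _ => f.toBoundedContinuousFunction.norm_coe_le_norm (v * t)
  rw [rieszMean_rieszMean, setIntegral_mul_setIntegral_comp_mul_eq (measurable_rieszKernel _ _)
    (measurable_rieszKernel _ _) (integrableOn_rieszKernel hdw hw) (integrableOn_rieszKernel hd hz)
    hg hgM]
  have hkernel : ∀ v ∈ Ioo (0 : ℝ) 1,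
      (∫ s in Ioo v 1, rieszKernel (d - 2 * w) w s * (rieszKernel d z (v / s) / s)) * f (v * t) =
        betaIntegral w z / 2 * (rieszKernel (d - 2 * w) (w + z) v * f (v * t)) := fun v hv => by
    rw [setIntegral_rieszKernel_mul_rieszKernel_div d w z hv]
    ring
  have hΓw := Gamma_ne_zero_of_re_pos hw
  have hΓz := Gamma_ne_zero_of_re_pos hz
  rw [setIntegral_congr_fun measurableSet_Ioo hkernel, integral_const_mul, rieszMean_eq_setIntegral,
    betaIntegral_eq_Gamma_mul_div hw hz, ← mul_assoc]
  congr 1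
  field_simp
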